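/- arXiv:2511.16007 — 4 statements merged into one kernel-verified Lean document; each statement's English description precedes it below -/
import Mathlib

section
/- Let {y_s}, {u_s}, {a_s}, {b_s} be nonnegative random variables adapted to a filtration {F_s} such that almost surely ∑_s a_s < ∞ and ∑_s b_s < ∞, and for all s, E[y_{s+1} | F_s] ≤ (1 + a_s) y_s - u_s + b_s. Then almost surely {y_s} converges and ∑_s u_s < ∞. -/
/-!
Dividing by `A s = ∏ t < s, (1 + a t)` removes the multiplicative term: `y s / A s` satisfies
the same recursion with `a = 0` and with `u s / A (s + 1)`, `b s / A (s + 1)` in place of `u s`,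
`b s`; since `∑ a < ∞`, `A s` increases to a finite limit, so nothing is lost.

With `a = 0`, `y s + ∑ t < s, (u t - b t)` would be a supermartingale, were `u t` and `b t`
integrable. Freezing it once the partial sums of `b` exceed `k` makes the increments integrable
(there `b t ≤ k`, and `u t ≤ y t + b t` because `E[y (t + 1) | ℱ t] ≥ 0`) and bounds the process
below by `-k`, so it converges almost surely by Doob's theorem. Almost every `ω` has `∑ b < k`
for some `k : ℕ`; there the frozen process is the original one, and its convergence together with
`y, u ≥ 0` forces `∑ u < ∞` and the convergence of `y`.
-/

open MeasureTheory Filter Finset Topology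

theorem MeasureTheory.Supermartingale.exists_ae_tendsto_of_forall_le {Ω : Type*}
    {m0 : MeasurableSpace Ω} {μ : Measure Ω} [IsFiniteMeasure μ] {ℱ : Filtration ℕ m0}
    {f : ℕ → Ω → ℝ} (hf : Supermartingale f ℱ μ) {c : ℝ} (hc : ∀ n ω, c ≤ f n ω) :
    ∀ᵐ ω ∂μ, ∃ l, Tendsto (fun n => f n ω) atTop (𝓝 l) := by
  have hbdd (n : ℕ) :
      eLpNorm ((-f) n) 1 μ ≤ (∫ ω, f 0 ω ∂μ + 2 * |c| * μ.real Set.univ).toNNReal := by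
    rw [Pi.neg_apply, eLpNorm_neg, eLpNorm_one_eq_lintegral_enorm,
      ← ofReal_integral_norm_eq_lintegral_enorm (hf.integrable n)]
    refine ENNReal.ofReal_le_ofReal ?_
    have hint := hf.setIntegral_le (Nat.zero_le n) MeasurableSet.univ
    rw [setIntegral_univ, setIntegral_univ] at hint
    calc ∫ ω, ‖f n ω‖ ∂μ ≤ ∫ ω, (f n ω + 2 * |c|) ∂μ := by
          refine integral_mono (hf.integrable n).norm
            ((hf.integrable n).add (integrable_const _)) fun ω => ?_
          have := hc n ω
          rw [Real.norm_eq_abs, abs_le]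
          constructor <;> cases abs_cases c <;> linarith
      _ = ∫ ω, f n ω ∂μ + 2 * |c| * μ.real Set.univ := by
          rw [integral_add (hf.integrable n) (integrable_const _), integral_const, smul_eq_mul,
            mul_comm]
      _ ≤ ∫ ω, f 0 ω ∂μ + 2 * |c| * μ.real Set.univ := by linarith
  filter_upwards [hf.neg.exists_ae_tendsto_of_bdd hbdd] with ω ⟨l, hl⟩
  exact ⟨-l, by simpa using hl.neg⟩

theorem tendsto_and_summable_of_tendsto_add_sum_sub {y u b : ℕ → ℝ} {l : ℝ}
    (hy0 : ∀ s, 0 ≤ y s) (hu0 : ∀ s, 0 ≤ u s) (hb : Summable b)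
    (h : Tendsto (fun s => y s + ∑ t ∈ range s, (u t - b t)) atTop (𝓝 l)) :
    (∃ l, Tendsto y atTop (𝓝 l)) ∧ Summable u := by
  have hyu : Tendsto (fun s => y s + ∑ t ∈ range s, u t) atTop (𝓝 (l + ∑' t, b t)) :=
    (h.add hb.hasSum.tendsto_sum_nat).congr fun s => by rw [sum_sub_distrib]; ring
  obtain ⟨C, hC⟩ := hyu.bddAbove_range
  have hu : Summable u := summable_of_sum_range_le hu0 fun s =>
    (le_add_of_nonneg_left (hy0 s)).trans (hC (Set.mem_range_self s))
  exact ⟨⟨_, (hyu.sub hu.hasSum.tendsto_sum_nat).congr fun s => add_sub_cancel_right _ _⟩, hu⟩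

namespace RobbinsSiegmund

variable {Ω : Type*} {y u b : ℕ → Ω → ℝ} {k : ℝ}

def sumLE (b : ℕ → Ω → ℝ) (k : ℝ) (s : ℕ) : Set Ω := {ω | ∑ i ∈ range (s + 1), b i ω ≤ k}

/-- The process `y s + ∑ t < s, (u t - b t)`, frozen from the first time the partial sums of `b`
exceed `k`. -/
noncomputable def stoppedSum (y u b : ℕ → Ω → ℝ) (k : ℝ) (s : ℕ) (ω : Ω) : ℝ :=
  y 0 ω + ∑ t ∈ range s,
    (sumLE b k t).indicator (fun ω => y (t + 1) ω - y t ω + u t ω - b t ω) ω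

lemma stoppedSum_eq_of_sum_le (hb0 : ∀ s ω, 0 ≤ b s ω) {s : ℕ} {ω : Ω}
    (h : ∑ i ∈ range s, b i ω ≤ k) :
    stoppedSum y u b k s ω = y s ω + ∑ t ∈ range s, (u t ω - b t ω) := by
  have hmem (t) (ht : t ∈ range s) : ω ∈ sumLE b k t :=
    (sum_le_sum_of_subset_of_nonneg (range_subset_range.2 (mem_range.1 ht))
      fun i _ _ => hb0 i ω).trans h
  calc stoppedSum y u b k s ω
      = y 0 ω + ∑ t ∈ range s, ((y (t + 1) ω - y t ω) + (u t ω - b t ω)) := by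
        refine congrArg _ (sum_congr rfl fun t ht => ?_)
        rw [Set.indicator_of_mem (hmem t ht)]
        ring
    _ = y s ω + ∑ t ∈ range s, (u t ω - b t ω) := by
        rw [sum_add_distrib, sum_range_sub (fun t => y t ω)]
        ring

lemma neg_le_stoppedSum (hy0 : ∀ s ω, 0 ≤ y s ω) (hu0 : ∀ s ω, 0 ≤ u s ω)
    (hb0 : ∀ s ω, 0 ≤ b s ω) (hk : 0 ≤ k) (s : ℕ) (ω : Ω) : -k ≤ stoppedSum y u b k s ω := by
  induction s with
  | zero => simpa [stoppedSum] using (neg_nonpos.2 hk).trans (hy0 0 ω)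
  | succ s ih =>
    by_cases hω : ω ∈ sumLE b k s
    · rw [stoppedSum_eq_of_sum_le hb0 hω, sum_sub_distrib]
      have := sum_nonneg fun t (_ : t ∈ range (s + 1)) => hu0 t ω
      linarith [hy0 (s + 1) ω, show ∑ i ∈ range (s + 1), b i ω ≤ k from hω]
    · rwa [stoppedSum, sum_range_succ, Set.indicator_of_notMem hω, add_zero]

section Measurability

variable {m0 : MeasurableSpace Ω} {ℱ : Filtration ℕ m0}

lemma measurableSet_sumLE (hb : Adapted ℱ b) (k : ℝ) (s : ℕ) :
    MeasurableSet[ℱ s] (sumLE b k s) :=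
  measurableSet_le (measurable_sum _ fun _ hi =>
    hb.measurable_le (Nat.lt_succ_iff.1 (mem_range.1 hi))) measurable_const

lemma adapted_stoppedSum (hy : Adapted ℱ y) (hu : Adapted ℱ u) (hb : Adapted ℱ b) (k : ℝ) :
    Adapted ℱ (stoppedSum y u b k) := fun s =>
  (hy.measurable_le (Nat.zero_le s)).add <| measurable_sum _ fun t ht => by
    have hts : t + 1 ≤ s := mem_range.1 ht
    exact ((((hy.measurable_le hts).sub (hy.measurable_le (by omega))).add
      (hu.measurable_le (by omega))).sub (hb.measurable_le (by omega))).indicator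
      (ℱ.mono (by omega) _ (measurableSet_sumLE hb k t))

end Measurability

section Supermartingale

variable {m0 : MeasurableSpace Ω} {μ : Measure Ω} {ℱ : Filtration ℕ m0}

lemma ae_le_add_of_condExp_le (hy0 : ∀ s ω, 0 ≤ y s ω)
    (hrec : ∀ s, μ[y (s + 1) | ℱ s] ≤ᵐ[μ] fun ω => y s ω - u s ω + b s ω) :
    ∀ᵐ ω ∂μ, ∀ s, u s ω ≤ y s ω + b s ω := by
  refine ae_all_iff.2 fun s => ?_
  filter_upwards [hrec s, condExp_nonneg (m := ℱ s) (ae_of_all μ (hy0 (s + 1)))] with ω hω h0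
  linarith [show (0 : ℝ) ≤ μ[y (s + 1) | ℱ s] ω from h0]

variable [IsFiniteMeasure μ] (hy : Adapted ℱ y) (hu : Adapted ℱ u) (hb : Adapted ℱ b)
  (hy0 : ∀ s ω, 0 ≤ y s ω) (hu0 : ∀ s ω, 0 ≤ u s ω) (hb0 : ∀ s ω, 0 ≤ b s ω)
  (hyint : ∀ s, Integrable (y s) μ)
  (hrec : ∀ s, μ[y (s + 1) | ℱ s] ≤ᵐ[μ] fun ω => y s ω - u s ω + b s ω)
include hy hu hb hy0 hu0 hb0 hyint hrec

lemma integrable_stoppedSum (k : ℝ) (s : ℕ) : Integrable (stoppedSum y u b k s) μ := by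
  refine (hyint 0).add (integrable_finsetSum _ fun t _ => ?_)
  refine Integrable.mono' (g := fun ω => y (t + 1) ω + y t ω + |k|)
    (((hyint (t + 1)).add (hyint t)).add (integrable_const _)) ?_ ?_
  · exact ((((hy.measurable.sub hy.measurable).add hu.measurable).sub hb.measurable).indicator
      (ℱ.le t _ (measurableSet_sumLE hb k t))).aestronglyMeasurable
  · filter_upwards [ae_le_add_of_condExp_le hy0 hrec] with ω hω
    by_cases hmem : ω ∈ sumLE b k t
    · have hbk : b t ω ≤ |k| := calc
        b t ω ≤ ∑ i ∈ range (t + 1), b i ω :=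
          single_le_sum (fun i _ => hb0 i ω) (self_mem_range_succ t)
        _ ≤ |k| := le_trans hmem (le_abs_self k)
      rw [Set.indicator_of_mem hmem, Real.norm_eq_abs, abs_le]
      constructor <;> linarith [hy0 t ω, hy0 (t + 1) ω, hu0 t ω, hb0 t ω, hω t]
    · rw [Set.indicator_of_notMem hmem, norm_zero]
      exact add_nonneg (add_nonneg (hy0 _ ω) (hy0 _ ω)) (abs_nonneg k)

lemma supermartingale_stoppedSum (k : ℝ) : Supermartingale (stoppedSum y u b k) ℱ μ := by
  have hint := integrable_stoppedSum hy hu hb hy0 hu0 hb0 hyint hrec k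
  refine supermartingale_nat (fun s => (adapted_stoppedSum hy hu hb k s).stronglyMeasurable)
    hint fun s => ?_
  set E := sumLE b k s
  set r : Ω → ℝ := E.indicator fun ω => u s ω - b s ω - y s ω
  have hsplit :
      stoppedSum y u b k (s + 1) = stoppedSum y u b k s + E.indicator (y (s + 1)) + r := by
    ext ω
    simp only [stoppedSum, sum_range_succ, Pi.add_apply, r]
    by_cases hmem : ω ∈ E
    · simp only [E, Set.indicator_of_mem hmem]
      ring
    · simp only [E, Set.indicator_of_notMem hmem]
      ring
  have hE : MeasurableSet[ℱ s] E := measurableSet_sumLE hb k s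
  have hyE : Integrable (E.indicator (y (s + 1))) μ := (hyint (s + 1)).indicator (ℱ.le s _ hE)
  have hr : Integrable r μ := by
    have := ((hint (s + 1)).sub (hint s)).sub hyE
    rwa [hsplit, add_assoc, add_sub_cancel_left, add_sub_cancel_left] at this
  have hr_meas : StronglyMeasurable[ℱ s] r :=
    ((((hu s).sub (hb s)).sub (hy s)).indicator hE).stronglyMeasurable
  rw [hsplit]
  filter_upwards [condExp_add ((hint s).add hyE) hr (ℱ s), condExp_add (hint s) hyE (ℱ s),
    condExp_indicator (hyint (s + 1)) hE, hrec s] with ω h₁ h₂ h₃ hω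
  rw [h₁, Pi.add_apply, h₂, Pi.add_apply, h₃,
    condExp_of_stronglyMeasurable (ℱ.le s) (adapted_stoppedSum hy hu hb k s).stronglyMeasurable
      (hint s), condExp_of_stronglyMeasurable (ℱ.le s) hr_meas hr]
  by_cases hmem : ω ∈ E
  · simp only [r, Set.indicator_of_mem hmem]
    linarith
  · simp [r, Set.indicator_of_notMem hmem]

theorem ae_tendsto_and_summable_of_condExp_le (hbS : ∀ᵐ ω ∂μ, Summable fun s => b s ω) :
    ∀ᵐ ω ∂μ, (∃ l, Tendsto (fun s => y s ω) atTop (𝓝 l)) ∧ Summable fun s => u s ω := by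
  have hconv : ∀ᵐ ω ∂μ, ∀ k : ℕ, ∃ l, Tendsto (fun s => stoppedSum y u b k s ω) atTop (𝓝 l) :=
    ae_all_iff.2 fun k => (supermartingale_stoppedSum hy hu hb hy0 hu0 hb0 hyint hrec k)
      |>.exists_ae_tendsto_of_forall_le (neg_le_stoppedSum hy0 hu0 hb0 k.cast_nonneg)
  filter_upwards [hbS, hconv] with ω hbω hω
  obtain ⟨l, hl⟩ := hω ⌈∑' s, b s ω⌉₊
  have hsum_le (s : ℕ) : ∑ i ∈ range s, b i ω ≤ ⌈∑' s, b s ω⌉₊ :=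
    (hbω.sum_le_tsum _ fun i _ => hb0 i ω).trans (Nat.le_ceil _)
  exact tendsto_and_summable_of_tendsto_add_sum_sub (hy0 · ω) (hu0 · ω) hbω
    (hl.congr fun s => stoppedSum_eq_of_sum_le hb0 (hsum_le s))

end Supermartingale

noncomputable def prodOneAdd (a : ℕ → Ω → ℝ) (s : ℕ) (ω : Ω) : ℝ := ∏ t ∈ range s, (1 + a t ω)

section Normalization

variable {a : ℕ → Ω → ℝ}

lemma one_le_prodOneAdd {ω : Ω} (ha0 : ∀ t, 0 ≤ a t ω) (s : ℕ) : 1 ≤ prodOneAdd a s ω :=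
  one_le_prod fun t _ => le_add_of_nonneg_right (ha0 t)

lemma prodOneAdd_pos {ω : Ω} (ha0 : ∀ t, 0 ≤ a t ω) (s : ℕ) : 0 < prodOneAdd a s ω :=
  one_pos.trans_le (one_le_prodOneAdd ha0 s)

lemma prodOneAdd_succ (s : ℕ) (ω : Ω) :
    prodOneAdd a (s + 1) ω = prodOneAdd a s ω * (1 + a s ω) :=
  prod_range_succ _ _

lemma tendsto_and_summable_of_div_prodOneAdd {ω : Ω} (ha0 : ∀ t, 0 ≤ a t ω)
    (haS : Summable fun t => a t ω) (hu0 : ∀ t, 0 ≤ u t ω)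
    (hy : ∃ l, Tendsto (fun s => y s ω / prodOneAdd a s ω) atTop (𝓝 l))
    (hu : Summable fun s => u s ω / prodOneAdd a (s + 1) ω) :
    (∃ l, Tendsto (fun s => y s ω) atTop (𝓝 l)) ∧ Summable fun s => u s ω := by
  have hA : Tendsto (fun s => prodOneAdd a s ω) atTop (𝓝 (∏' t, (1 + a t ω))) :=
    (Real.multipliable_one_add_of_summable haS).hasProd.tendsto_prod_nat
  obtain ⟨l, hl⟩ := hy
  obtain ⟨C, hC⟩ := hA.bddAbove_range
  refine ⟨⟨_, (hl.mul hA).congr fun s => div_mul_cancel₀ _ (prodOneAdd_pos ha0 s).ne'⟩, ?_⟩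
  refine hu.mul_right C |>.of_nonneg_of_le hu0 fun s => ?_
  calc u s ω = u s ω / prodOneAdd a (s + 1) ω * prodOneAdd a (s + 1) ω :=
        (div_mul_cancel₀ _ (prodOneAdd_pos ha0 (s + 1)).ne').symm
    _ ≤ u s ω / prodOneAdd a (s + 1) ω * C :=
        mul_le_mul_of_nonneg_left (hC (Set.mem_range_self _))
          (div_nonneg (hu0 s) (prodOneAdd_pos ha0 (s + 1)).le)

variable {m0 : MeasurableSpace Ω} {μ : Measure Ω} {ℱ : Filtration ℕ m0}

lemma measurable_prodOneAdd (ha : Adapted ℱ a) {s n : ℕ} (h : s ≤ n + 1) :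
    Measurable[ℱ n] (prodOneAdd a s) :=
  measurable_prod _ fun t ht => measurable_const.add (ha.measurable_le (by
    have := mem_range.1 ht
    omega))

lemma integrable_div_prodOneAdd (ha : Adapted ℱ a) (ha0 : ∀ s ω, 0 ≤ a s ω) {f : Ω → ℝ}
    (hf : Integrable f μ) (s : ℕ) : Integrable (fun ω => f ω / prodOneAdd a s ω) μ :=
  hf.norm.mono' (hf.aestronglyMeasurable.div₀
      ((measurable_prodOneAdd ha (Nat.le_succ s)).mono (ℱ.le s) le_rfl).aestronglyMeasurable)
    (ae_of_all _ fun ω => by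
      rw [norm_div]
      exact div_le_self (norm_nonneg _)
        ((one_le_prodOneAdd (ha0 · ω) s).trans (Real.le_norm_self _)))

lemma condExp_div_prodOneAdd_le (ha : Adapted ℱ a) (ha0 : ∀ s ω, 0 ≤ a s ω)
    (hyint : ∀ s, Integrable (y s) μ)
    (hrec : ∀ s, μ[y (s + 1) | ℱ s] ≤ᵐ[μ] fun ω => (1 + a s ω) * y s ω - u s ω + b s ω)
    (s : ℕ) :
    μ[fun ω => y (s + 1) ω / prodOneAdd a (s + 1) ω | ℱ s] ≤ᵐ[μ] fun ω =>
      y s ω / prodOneAdd a s ω - u s ω / prodOneAdd a (s + 1) ω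
        + b s ω / prodOneAdd a (s + 1) ω := by
  have hdiv : (fun ω => y (s + 1) ω / prodOneAdd a (s + 1) ω)
      = (prodOneAdd a (s + 1))⁻¹ * y (s + 1) := by
    ext ω
    exact div_eq_inv_mul _ _
  have hpull := condExp_mul_of_stronglyMeasurable_left
    (measurable_prodOneAdd ha le_rfl).inv.stronglyMeasurable
    (hdiv ▸ integrable_div_prodOneAdd ha ha0 (hyint (s + 1)) (s + 1)) (hyint (s + 1))
  rw [hdiv]
  filter_upwards [hpull, hrec s] with ω hω hrecω
  have hA : prodOneAdd a s ω ≠ 0 := (prodOneAdd_pos (ha0 · ω) s).ne'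
  have ha1 : 1 + a s ω ≠ 0 := by linarith [ha0 s ω]
  rw [hω, Pi.mul_apply, Pi.inv_apply]
  calc (prodOneAdd a (s + 1) ω)⁻¹ * μ[y (s + 1) | ℱ s] ω
      ≤ (prodOneAdd a (s + 1) ω)⁻¹ * ((1 + a s ω) * y s ω - u s ω + b s ω) :=
        mul_le_mul_of_nonneg_left hrecω (inv_nonneg.2 (prodOneAdd_pos (ha0 · ω) _).le)
    _ = _ := by
        rw [prodOneAdd_succ]
        field_simp

theorem ae_tendsto_and_summable_div_prodOneAdd [IsFiniteMeasure μ]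
    (hy : Adapted ℱ y) (hu : Adapted ℱ u) (ha : Adapted ℱ a) (hb : Adapted ℱ b)
    (hy0 : ∀ s ω, 0 ≤ y s ω) (hu0 : ∀ s ω, 0 ≤ u s ω)
    (ha0 : ∀ s ω, 0 ≤ a s ω) (hb0 : ∀ s ω, 0 ≤ b s ω)
    (hyint : ∀ s, Integrable (y s) μ) (hbS : ∀ᵐ ω ∂μ, Summable fun s => b s ω)
    (hrec : ∀ s, μ[y (s + 1) | ℱ s] ≤ᵐ[μ] fun ω => (1 + a s ω) * y s ω - u s ω + b s ω) :
    ∀ᵐ ω ∂μ, (∃ l, Tendsto (fun s => y s ω / prodOneAdd a s ω) atTop (𝓝 l)) ∧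
      Summable fun s => u s ω / prodOneAdd a (s + 1) ω := by
  have hA0 (s : ℕ) (ω : Ω) := (prodOneAdd_pos (ha0 · ω) s).le
  refine ae_tendsto_and_summable_of_condExp_le
    (fun s => (hy s).div (measurable_prodOneAdd ha (Nat.le_succ s)))
    (fun s => (hu s).div (measurable_prodOneAdd ha le_rfl))
    (fun s => (hb s).div (measurable_prodOneAdd ha le_rfl))
    (fun s ω => div_nonneg (hy0 s ω) (hA0 s ω)) (fun s ω => div_nonneg (hu0 s ω) (hA0 _ ω))
    (fun s ω => div_nonneg (hb0 s ω) (hA0 _ ω))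
    (fun s => integrable_div_prodOneAdd ha ha0 (hyint s) s)
    (condExp_div_prodOneAdd_le ha ha0 hyint hrec) ?_
  filter_upwards [hbS] with ω hbω
  exact hbω.of_nonneg_of_le (fun s => div_nonneg (hb0 s ω) (hA0 _ ω))
    fun s => div_le_self (hb0 s ω) (one_le_prodOneAdd (ha0 · ω) _)

end Normalization

end RobbinsSiegmund

theorem stmt_5 {Ω : Type*} {m0 : MeasurableSpace Ω} (μ : Measure Ω)
    [IsProbabilityMeasure μ] (ℱ : Filtration ℕ m0)
    (y u a b : ℕ → Ω → ℝ)
    (hy : Adapted ℱ y) (hu : Adapted ℱ u) (ha : Adapted ℱ a) (hb : Adapted ℱ b)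
    (hy0 : ∀ s ω, 0 ≤ y s ω) (hu0 : ∀ s ω, 0 ≤ u s ω)
    (ha0 : ∀ s ω, 0 ≤ a s ω) (hb0 : ∀ s ω, 0 ≤ b s ω)
    (hyint : ∀ s, Integrable (y s) μ)
    (haS : ∀ᵐ ω ∂μ, Summable fun s => a s ω)
    (hbS : ∀ᵐ ω ∂μ, Summable fun s => b s ω)
    (hrec : ∀ s, μ[y (s+1) | ℱ s]
      ≤ᵐ[μ] fun ω => (1 + a s ω) * y s ω - u s ω + b s ω) :
    ∀ᵐ ω ∂μ, (∃ l, Filter.Tendsto (fun s => y s ω) Filter.atTop (nhds l)) ∧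
      Summable fun s => u s ω := by
  filter_upwards [RobbinsSiegmund.ae_tendsto_and_summable_div_prodOneAdd hy hu ha hb hy0 hu0 ha0
    hb0 hyint hbS hrec, haS] with ω ⟨hyω, huω⟩ haω
  exact RobbinsSiegmund.tendsto_and_summable_of_div_prodOneAdd (ha0 · ω) haω (hu0 · ω) hyω huω
end

section
/- Define f : (0,∞) → ℝ by f(x) = x·log x and F : (0,∞) → ℝ by F(x) = (x+1)·eˣ. Then F satisfies the strong pseudomonotonicity condition relative to the Bregman distance of f with constant β = 1: for all x, y > 0, if F(x)·(y - x) ≥ 0 then F(y)·(y - x) ≥ D(x,y), where D(x,y) = x·log(x/y) + y - x. -/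
theorem stmt_6 (F f : ℝ → ℝ) (D : ℝ → ℝ → ℝ) (hf : ∀ x, f x = x * Real.log x)
    (hF : ∀ x, F x = (x + 1) * Real.exp x)
    (hD : ∀ x y, D x y = x * Real.log (x / y) + y - x) :
    ∀ x y, 0 < x → 0 < y → F x * (y - x) ≥ 0 → F y * (y - x) ≥ D x y := by
  intro x y hx hy h
  rw [hF] at h ⊢
  rw [hD]
  have hex := Real.exp_pos x
  have hP : 0 < (x + 1) * Real.exp x := mul_pos (by linarith) hex
  have hyx : 0 ≤ y - x := nonneg_of_mul_nonneg_left (by linarith [h] : (0:ℝ) ≤ (y - x) * ((x + 1) * Real.exp x)) hP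
  have hlog : Real.log (x / y) ≤ 0 :=
    Real.log_nonpos (by positivity) ((div_le_one hy).mpr (by linarith))
  have hxl : x * Real.log (x / y) ≤ 0 := mul_nonpos_of_nonneg_of_nonpos hx.le hlog
  have hey : 1 ≤ Real.exp y := Real.one_le_exp hy.le
  nlinarith [mul_nonneg hyx (sub_nonneg.mpr hey), mul_nonneg hy.le (mul_nonneg hyx (Real.exp_pos y).le)]
end

section
/- Let K ⊆ ℝ^n be convex, f : ℝ^n → ℝ differentiable and 1-strongly convex, g : K → ℝ convex, α > 0, γ ∈ [0,1], y ∈ ℝ^n, and z₁, z₂ ∈ ℝ^n. Suppose z⁺ minimizes over K the function z ↦ α g(z) + α⟨y, z⟩ + γ D(z, z₁) + (1 - γ) D(z, z₂), where D is the Bregman distance of f. Then for all z ∈ K: α g(z) - α g(z⁺) + α ⟨y, z - z⁺⟩ ≥ D(z, z⁺) + γ (D(z⁺, z₁) - D(z, z₁)) + (1 - γ)(D(z⁺, z₂) - D(z, z₂)). -/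
/-!
The point `zp` minimizes `α g + h` over `K`, where the smooth part
`h w = α ⟪y, w⟫ + γ D w z₁ + (1 - γ) D w z₂` has gradient
`α y + γ (f' zp - f' z₁) + (1 - γ) (f' zp - f' z₂)` at `zp`. Comparing with the points
`zp + t (z - zp)` and letting `t → 0⁺` gives the first-order optimality condition
`α (g z - g zp) + ⟪∇h zp, z - zp⟫ ≥ 0`, and the three-point identity
`D z u - D zp u = D z zp + ⟪f' zp - f' u, z - zp⟫` turns it into the claimed inequality.
-/

open Set

theorem IsMinOn.variational_inequality_of_convexOn_add {E : Type*} [NormedAddCommGroup E]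
    [NormedSpace ℝ E] {K : Set E} {g h : E → ℝ} {h' : E →L[ℝ] ℝ} {x z : E}
    (hmin : IsMinOn (fun w => g w + h w) K x) (hg : ConvexOn ℝ K g)
    (hh : HasFDerivWithinAt h h' K x) (hx : x ∈ K) (hz : z ∈ K) :
    0 ≤ g z - g x + h' (z - x) := by
  set c := g z - g x
  have hseg : MapsTo (fun t : ℝ => x + t • (z - x)) (Icc 0 1) K :=
    fun t ht => hg.1.add_smul_sub_mem hx hz ht
  -- on the segment `g` lies below its chord, so replacing it by the chord keeps `0` a minimum
  have hφmin : IsMinOn (fun t : ℝ => h (x + t • (z - x)) + t * c) (Icc 0 1) 0 := by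
    intro t ht
    have hchord : g (x + t • (z - x)) ≤ g x + t * c := by
      have hconv := hg.2 hx hz (sub_nonneg.2 ht.2) ht.1 (sub_add_cancel 1 t)
      rw [show x + t • (z - x) = (1 - t) • x + t • z by module]
      simp only [smul_eq_mul, c] at hconv ⊢
      linarith
    have hle := hmin (hseg ht)
    simp only [mem_ofPred_eq, zero_smul, add_zero, zero_mul] at hle ⊢
    linarith
  have hφderiv : HasDerivWithinAt (fun t : ℝ => h (x + t • (z - x)) + t * c)
      (h' (z - x) + c) (Icc 0 1) 0 := by
    have hline : HasDerivWithinAt (fun t : ℝ => x + t • (z - x)) (z - x) (Icc 0 1) 0 := by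
      simpa using ((hasDerivWithinAt_id 0 (Icc (0:ℝ) 1)).smul_const (z - x)).const_add x
    have hcomp := hh.comp_hasDerivWithinAt_of_eq 0 hline hseg (by simp)
    exact (hcomp.add ((hasDerivWithinAt_id 0 (Icc (0:ℝ) 1)).mul_const c)).congr_deriv (by simp)
  have hone : (1 : ℝ) ∈ posTangentConeAt (Icc 0 1) 0 :=
    mem_posTangentConeAt_of_segment_subset (by simp [segment_eq_Icc])
  simpa [add_comm] using hφmin.localize.hasFDerivWithinAt_nonneg hφderiv hone

open scoped RealInnerProductSpace

section Bregman

variable {E : Type*} [NormedAddCommGroup E] [InnerProductSpace ℝ E] {f : E → ℝ} {f' : E → E}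
  {D : E → E → ℝ}

theorem bregman_three_point (hD : ∀ x y, D x y = f x - f y - ⟪f' y, x - y⟫) (x y u : E) :
    D x u - D y u = D x y + ⟪f' y - f' u, x - y⟫ := by
  simp only [hD, inner_sub_left, inner_sub_right]
  ring

theorem hasFDerivAt_bregman_left [CompleteSpace E] {x : E} (hf : HasGradientAt f (f' x) x)
    (hD : ∀ x y, D x y = f x - f y - ⟪f' y, x - y⟫) (u : E) :
    HasFDerivAt (fun w => D w u) (innerSL ℝ (f' x - f' u)) x := by
  have hfun : (fun w => D w u) = fun w => (f w - f u) - (innerSL ℝ (f' u) w - ⟪f' u, u⟫) := by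
    funext w
    simp only [hD, innerSL_apply_apply, inner_sub_right]
  rw [hfun, map_sub]
  exact (((hasGradientAt_iff_hasFDerivAt.1 hf).sub_const _).sub
    ((innerSL ℝ (f' u)).hasFDerivAt.sub_const _)).congr_fderiv (by ext; simp)

end Bregman

theorem stmt_8_general (n : ℕ) (K : Set (EuclideanSpace ℝ (Fin n)))
    (f : EuclideanSpace ℝ (Fin n) → ℝ)
    (f' : EuclideanSpace ℝ (Fin n) → EuclideanSpace ℝ (Fin n))
    (hdiff : ∀ x, HasGradientAt f (f' x) x)
    (D : EuclideanSpace ℝ (Fin n) → EuclideanSpace ℝ (Fin n) → ℝ)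
    (hD : ∀ x y, D x y = f x - f y - ⟪f' y, x - y⟫)
    (g : EuclideanSpace ℝ (Fin n) → ℝ) (hg : ConvexOn ℝ K g)
    (α γ : ℝ) (hα : 0 < α)
    (y z₁ z₂ : EuclideanSpace ℝ (Fin n))
    (zp : EuclideanSpace ℝ (Fin n)) (hzp : zp ∈ K)
    (hmin : ∀ z ∈ K,
      α * g zp + α * ⟪y, zp⟫ + γ * D zp z₁ + (1 - γ) * D zp z₂
        ≤ α * g z + α * ⟪y, z⟫ + γ * D z z₁ + (1 - γ) * D z z₂) :
    ∀ z ∈ K, α * g z - α * g zp + α * ⟪y, z - zp⟫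
      ≥ D z zp + γ * (D zp z₁ - D z z₁) + (1 - γ) * (D zp z₂ - D z z₂) := by
  intro z hz
  have hopt :
      IsMinOn (fun w => α * g w + (α * ⟪y, w⟫ + γ * D w z₁ + (1 - γ) * D w z₂)) K zp :=
    isMinOn_iff.2 fun w hw => by linarith [hmin w hw]
  have hderiv := (((innerSL ℝ y).hasFDerivAt.const_mul α).add
    ((hasFDerivAt_bregman_left (hdiff zp) hD z₁).const_mul γ)).add
    ((hasFDerivAt_bregman_left (hdiff zp) hD z₂).const_mul (1 - γ))
  have hvi := hopt.variational_inequality_of_convexOn_add (hg.smul hα.le)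
    hderiv.hasFDerivWithinAt hzp hz
  simp only [_root_.add_apply, _root_.smul_apply, innerSL_apply_apply, smul_eq_mul] at hvi
  linear_combination hvi - γ * bregman_three_point hD z zp z₁
    - (1 - γ) * bregman_three_point hD z zp z₂

theorem stmt_8 (n : ℕ) (K : Set (EuclideanSpace ℝ (Fin n))) (hK : Convex ℝ K)
    (f : EuclideanSpace ℝ (Fin n) → ℝ)
    (f' : EuclideanSpace ℝ (Fin n) → EuclideanSpace ℝ (Fin n))
    (hdiff : ∀ x, HasGradientAt f (f' x) x)
    (hsc : ∀ x y, f x ≥ f y + ⟪f' y, x - y⟫ + (1/2) * ‖x - y‖^2)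
    (D : EuclideanSpace ℝ (Fin n) → EuclideanSpace ℝ (Fin n) → ℝ)
    (hD : ∀ x y, D x y = f x - f y - ⟪f' y, x - y⟫)
    (g : EuclideanSpace ℝ (Fin n) → ℝ) (hg : ConvexOn ℝ K g)
    (α γ : ℝ) (hα : 0 < α) (hγ0 : 0 ≤ γ) (hγ1 : γ ≤ 1)
    (y z₁ z₂ : EuclideanSpace ℝ (Fin n))
    (zp : EuclideanSpace ℝ (Fin n)) (hzp : zp ∈ K)
    (hmin : ∀ z ∈ K,
      α * g zp + α * ⟪y, zp⟫ + γ * D zp z₁ + (1 - γ) * D zp z₂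
        ≤ α * g z + α * ⟪y, z⟫ + γ * D z z₁ + (1 - γ) * D z z₂) :
    ∀ z ∈ K, α * g z - α * g zp + α * ⟪y, z - zp⟫
      ≥ D z zp + γ * (D zp z₁ - D z z₁) + (1 - γ) * (D zp z₂ - D z z₂) :=
  stmt_8_general n K f f' hdiff D hD g hg α γ hα y z₁ z₂ zp hzp hmin
end

section
/- Let f(z) = ∑_{i=1}^{n} z_i log z_i be the negative entropy on the simplex Δ^n = {z ∈ ℝ^n : z_i > 0, ∑ z_i = 1}. Then f is 1-strongly convex on Δ^n with respect to the ℓ₁-norm: for all x, y ∈ Δ^n, f(x) ≥ f(y) + ⟨∇f(y), x - y⟩ + (1/2)‖x - y‖₁². -/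
open Real Set Finset InformationTheory

/-!
With `klFun t = t log t + 1 - t`, the Bregman divergence of the negative entropy is
`∑ yᵢ klFun (xᵢ / yᵢ) = D(x, y)`. The gap `klFun t - 3 (t - 1)² / (2 (t + 2))` is convex on
`[0, ∞)` (its second derivative `1/t - 27/(t + 2)³` is nonnegative by AM-GM) and critical at
`t = 1`, so it is nonnegative. Scaling gives `(xᵢ - yᵢ)² ≤ (2/3)(xᵢ + 2yᵢ) · yᵢ klFun (xᵢ / yᵢ)`,
and Cauchy-Schwarz with weights `(2/3)(xᵢ + 2yᵢ)`, which sum to `2` on the simplex, gives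
`‖x - y‖₁² ≤ 2 D(x, y)`.
-/

noncomputable def pinskerGap (t : ℝ) : ℝ := klFun t - 3 * (t - 1) ^ 2 / (2 * (t + 2))

noncomputable def pinskerGapDeriv (t : ℝ) : ℝ := log t - 3 * ((t - 1) * (t + 5)) / (2 * (t + 2) ^ 2)

lemma hasDerivAt_pinskerGap {t : ℝ} (ht : 0 < t) :
    HasDerivAt pinskerGap (pinskerGapDeriv t) t := by
  have h2 : t + 2 ≠ 0 := by linarith
  have hq : HasDerivAt (fun t : ℝ => 3 * (t - 1) ^ 2 / (2 * (t + 2)))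
      (3 * ((t - 1) * (t + 5)) / (2 * (t + 2) ^ 2)) t := by
    refine ((((hasDerivAt_id' t).sub_const 1).fun_pow 2).const_mul 3).fun_div
      (((hasDerivAt_id' t).add_const 2).const_mul 2) (by positivity) |>.congr_deriv ?_
    field_simp
    ring
  exact (hasDerivAt_klFun ht.ne').sub hq

lemma hasDerivAt_pinskerGapDeriv {t : ℝ} (ht : 0 < t) :
    HasDerivAt pinskerGapDeriv (t⁻¹ - 27 / (t + 2) ^ 3) t := by
  have h2 : t + 2 ≠ 0 := by linarith
  have hq : HasDerivAt (fun t : ℝ => 3 * ((t - 1) * (t + 5)) / (2 * (t + 2) ^ 2))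
      (27 / (t + 2) ^ 3) t := by
    refine ((((hasDerivAt_id' t).sub_const 1).fun_mul ((hasDerivAt_id' t).add_const 5)).const_mul
      3).fun_div ((((hasDerivAt_id' t).add_const 2).fun_pow 2).const_mul 2) (by positivity)
      |>.congr_deriv ?_
    field_simp
    ring
  exact (hasDerivAt_log ht.ne').sub hq

lemma convexOn_pinskerGap : ConvexOn ℝ (Ici 0) pinskerGap := by
  have hcont : ContinuousOn pinskerGap (Ici 0) := by
    refine continuous_klFun.continuousOn.sub (ContinuousOn.div (by fun_prop) (by fun_prop) ?_)
    intro t ht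
    have : (0 : ℝ) ≤ t := ht
    positivity
  refine convexOn_of_hasDerivWithinAt2_nonneg (f' := pinskerGapDeriv)
    (f'' := fun t => t⁻¹ - 27 / (t + 2) ^ 3) (convex_Ici 0) hcont
    (fun t ht => ?_) (fun t ht => ?_) (fun t ht => ?_)
  all_goals rw [interior_Ici] at ht
  · exact (hasDerivAt_pinskerGap ht).hasDerivWithinAt
  · exact (hasDerivAt_pinskerGapDeriv ht).hasDerivWithinAt
  · rw [Set.mem_Ioi] at ht
    have hamgm : 27 * t ≤ (t + 2) ^ 3 := by nlinarith [mul_nonneg (sq_nonneg (t - 1)) ht.le]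
    rw [sub_nonneg, div_le_iff₀ (by positivity), inv_mul_eq_div, le_div_iff₀ ht]
    linarith

lemma three_mul_sq_div_le_klFun {t : ℝ} (ht : 0 ≤ t) :
    3 * (t - 1) ^ 2 / (2 * (t + 2)) ≤ klFun t := by
  have hmin : IsMinOn pinskerGap (Ici 0) 1 := by
    refine convexOn_pinskerGap.isMinOn_of_rightDeriv_eq_zero (by simp) ?_
    rw [(hasDerivAt_pinskerGap one_pos).hasDerivWithinAt.derivWithin (uniqueDiffWithinAt_Ioi 1)]
    simp [pinskerGapDeriv]
  simpa [pinskerGap, klFun_one] using hmin ht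

lemma sq_sub_le_mul_mul_klFun_div {a b : ℝ} (ha : 0 ≤ a) (hb : 0 < b) :
    (a - b) ^ 2 ≤ 2 * (a + 2 * b) / 3 * (b * klFun (a / b)) := by
  have h := three_mul_sq_div_le_klFun (div_nonneg ha hb.le)
  rw [div_le_iff₀ (by positivity)] at h
  calc (a - b) ^ 2 = b ^ 2 * (3 * (a / b - 1) ^ 2) / 3 := by field_simp
    _ ≤ b ^ 2 * (klFun (a / b) * (2 * (a / b + 2))) / 3 := by gcongr
    _ = 2 * (a + 2 * b) / 3 * (b * klFun (a / b)) := by field_simp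

lemma sq_sum_abs_sub_le_mul_sum_mul_klFun_div {ι : Type*} (s : Finset ι) {x y : ι → ℝ}
    (hx : ∀ i ∈ s, 0 ≤ x i) (hy : ∀ i ∈ s, 0 < y i) :
    (∑ i ∈ s, |x i - y i|) ^ 2
      ≤ (∑ i ∈ s, 2 * (x i + 2 * y i) / 3) * ∑ i ∈ s, y i * klFun (x i / y i) := by
  refine sum_sq_le_sum_mul_sum_of_sq_le_mul s (fun i hi => ?_) (fun i hi => ?_) (fun i hi => ?_)
  · have := hx i hi; have := hy i hi; positivity
  · exact mul_nonneg (hy i hi).le (klFun_nonneg (div_nonneg (hx i hi) (hy i hi).le))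
  · rw [sq_abs]
    exact sq_sub_le_mul_mul_klFun_div (hx i hi) (hy i hi)

lemma mul_log_sub_tangent_eq_mul_klFun_div {a b : ℝ} (ha : 0 < a) (hb : 0 < b) :
    a * log a - (b * log b + (log b + 1) * (a - b)) = b * klFun (a / b) := by
  rw [klFun_apply, log_div ha.ne' hb.ne']
  field_simp
  ring

theorem stmt_14 (n : ℕ) (x y : Fin n → ℝ)
    (hx : ∀ i, 0 < x i) (hy : ∀ i, 0 < y i)
    (hxs : ∑ i, x i = 1) (hys : ∑ i, y i = 1) :
    ∑ i, x i * Real.log (x i) ≥ ∑ i, y i * Real.log (y i)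
      + ∑ i, (Real.log (y i) + 1) * (x i - y i)
      + (1/2) * (∑ i, |x i - y i|)^2 := by
  have hkl : ∑ i, x i * log (x i) - (∑ i, y i * log (y i) + ∑ i, (log (y i) + 1) * (x i - y i))
      = ∑ i, y i * klFun (x i / y i) := by
    rw [← sum_add_distrib, ← sum_sub_distrib]
    exact sum_congr rfl fun i _ => mul_log_sub_tangent_eq_mul_klFun_div (hx i) (hy i)
  have hweight : ∑ i, 2 * (x i + 2 * y i) / 3 = 2 := by
    simp only [← sum_div, ← mul_sum, sum_add_distrib, hxs, hys]
    norm_num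
  have hpinsker := sq_sum_abs_sub_le_mul_sum_mul_klFun_div univ
    (fun i _ => (hx i).le) (fun i _ => hy i)
  rw [hweight] at hpinsker
  linarith
end
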